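/- arXiv:2104.14832 — 4 statements merged into one kernel-verified Lean document; each statement's English description precedes it below -/
import Mathlib

section
/- Let U₁, …, U_E : H → H be strictly quasi-nonexpansive operators with ⋂_t Fix U_t ≠ ∅, weights ω_t > 0 with Σ ω_t = 1, and T = Σ_t ω_t U_t. Then for every z ∈ ⋂_t Fix U_t and every x with U_t x ≠ x for some t, ⟨z − x, T x − x⟩ > (1/2) Σ_t ω_t ‖U_t x − x‖². -/
open scoped RealInnerProductSpace

/-!
Expanding `‖U t x - z‖²` around `x` turns strict quasi-nonexpansiveness into
`‖U t x - x‖² < 2 ⟪z - x, U t x - x⟫` whenever `U t x ≠ x` (and `0 = 0` otherwise).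
Since the weights sum to one, `T x - x = ∑ ω t • (U t x - x)`, so averaging these
inequalities with positive weights gives the strict bound.
-/

section

variable {H : Type*} [NormedAddCommGroup H] [InnerProductSpace ℝ H]

theorem norm_sub_sq_lt_two_inner_of_norm_sub_lt {x y z : H} (h : ‖y - z‖ < ‖x - z‖) :
    ‖y - x‖ ^ 2 < 2 * ⟪z - x, y - x⟫ := by
  have hsq : ‖y - z‖ ^ 2 = ‖y - x‖ ^ 2 - 2 * ⟪y - x, z - x⟫ + ‖x - z‖ ^ 2 := by
    rw [← norm_sub_rev z x, ← norm_sub_sq_real, sub_sub_sub_cancel_right]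
  have hlt : ‖y - z‖ ^ 2 < ‖x - z‖ ^ 2 := pow_lt_pow_left₀ h (norm_nonneg _) two_ne_zero
  rw [real_inner_comm] at hsq
  linarith

theorem Finset.sum_smul_sub_of_sum_eq_one {ι : Type*} (s : Finset ι) {ω : ι → ℝ}
    (hω : ∑ t ∈ s, ω t = 1) (v : ι → H) (x : H) :
    ∑ t ∈ s, ω t • v t - x = ∑ t ∈ s, ω t • (v t - x) := by
  simp only [smul_sub]
  rw [Finset.sum_sub_distrib, ← Finset.sum_smul, hω, one_smul]

end

theorem average_inner_lower_bound_general
    {H : Type*} [NormedAddCommGroup H] [InnerProductSpace ℝ H]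
    {E : ℕ} (U : Fin E → H → H) (ω : Fin E → ℝ)
    (hω : ∀ t, 0 < ω t) (hωsum : ∑ t, ω t = 1)
    (hsqne : ∀ t x, U t x ≠ x → ∀ z, U t z = z → ‖U t x - z‖ < ‖x - z‖)
    (T : H → H) (hT : ∀ x, T x = ∑ t, ω t • U t x) :
    ∀ z, (∀ t, U t z = z) → ∀ x, (∃ t, U t x ≠ x) →
      (1/2) * ∑ t, ω t * ‖U t x - x‖^2 < ⟪z - x, T x - x⟫ := by
  intro z hz x ⟨s, hs⟩
  have hlt : ∀ t, U t x ≠ x → ‖U t x - x‖ ^ 2 < 2 * ⟪z - x, U t x - x⟫ := fun t ht =>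
    norm_sub_sq_lt_two_inner_of_norm_sub_lt (hsqne t x ht z (hz t))
  have hle : ∀ t, ‖U t x - x‖ ^ 2 ≤ 2 * ⟪z - x, U t x - x⟫ := fun t => by
    by_cases ht : U t x = x
    · simp [ht]
    · exact (hlt t ht).le
  rw [hT, Finset.sum_smul_sub_of_sum_eq_one _ hωsum, inner_sum, Finset.mul_sum]
  simp only [real_inner_smul_right]
  refine Finset.sum_lt_sum (fun t _ => ?_) ⟨s, Finset.mem_univ s, ?_⟩
  · nlinarith [hle t, hω t]
  · nlinarith [hlt s hs, hω s]

theorem average_inner_lower_bound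
    {H : Type*} [NormedAddCommGroup H] [InnerProductSpace ℝ H] [CompleteSpace H]
    {E : ℕ} (U : Fin E → H → H) (ω : Fin E → ℝ)
    (hω : ∀ t, 0 < ω t) (hωsum : ∑ t, ω t = 1)
    (hC : ∃ z, ∀ t, U t z = z)
    (hsqne : ∀ t x, U t x ≠ x → ∀ z, U t z = z → ‖U t x - z‖ < ‖x - z‖)
    (T : H → H) (hT : ∀ x, T x = ∑ t, ω t • U t x) :
    ∀ z, (∀ t, U t z = z) → ∀ x, (∃ t, U t x ≠ x) →
      (1/2) * ∑ t, ω t * ‖U t x - x‖^2 < ⟪z - x, T x - x⟫ :=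
  average_inner_lower_bound_general U ω hω hωsum hsqne T hT
end

section
/- With T = Σ_t ω_t U_t an average of strictly quasi-nonexpansive operators U_t having a common fixed point, and step size σ(x) satisfying 0 < σ(x) ≤ (Σ_t ω_t ‖U_t x − x‖²)/‖T x − x‖² for x ∉ Fix T, the generalized relaxation T_σ(x) = x + σ(x)(T x − x) is strictly quasi-nonexpansive. -/
/-!
Put `a = x - z` and `d_t = U_t x - x`, so that `T x - x = ∑ ω_t d_t`. The polarization identity
`2⟪d_t, a⟫ = ‖U_t x - z‖² - ‖a‖² - ‖d_t‖²` and strict quasi-nonexpansiveness give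
`2⟪T x - x, a⟫ < -∑ ω_t ‖d_t‖² ≤ -σ(x) ‖T x - x‖²`, the strict inequality coming from an index with
`U_t x ≠ x`. Expanding `‖a + σ(x) (T x - x)‖²` then shows it is smaller than `‖a‖²`.
-/

open scoped RealInnerProductSpace

section

variable {H : Type*} [NormedAddCommGroup H] [InnerProductSpace ℝ H]

theorem two_mul_inner_sub_sub_eq (x y z : H) :
    2 * ⟪y - x, x - z⟫ = ‖y - z‖ ^ 2 - ‖x - z‖ ^ 2 - ‖y - x‖ ^ 2 := by
  have hsplit : y - z = (x - z) + (y - x) := by abel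
  rw [hsplit, norm_add_sq_real, real_inner_comm]
  ring

theorem norm_sq_add_smul_eq (a v : H) (s : ℝ) :
    ‖a + s • v‖ ^ 2 = ‖a‖ ^ 2 + s * (2 * ⟪v, a⟫ + s * ‖v‖ ^ 2) := by
  rw [norm_add_sq_real, real_inner_smul_right, norm_smul, mul_pow, Real.norm_eq_abs, sq_abs,
    real_inner_comm]
  ring

theorem norm_add_smul_lt_of_two_mul_inner_add_lt {a v : H} {s : ℝ} (hs : 0 < s)
    (h : 2 * ⟪v, a⟫ + s * ‖v‖ ^ 2 < 0) : ‖a + s • v‖ < ‖a‖ := by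
  refine lt_of_pow_lt_pow_left₀ 2 (norm_nonneg a) ?_
  rw [norm_sq_add_smul_eq]
  nlinarith

theorem two_mul_inner_sum_smul_sub_lt {ι : Type*} [Fintype ι] {ω : ι → ℝ} (hω : ∀ i, 0 < ω i)
    {y : ι → H} {x z : H} (hle : ∀ i, ‖y i - z‖ ≤ ‖x - z‖) (hlt : ∃ i, ‖y i - z‖ < ‖x - z‖) :
    2 * ⟪∑ i, ω i • (y i - x), x - z⟫ < -∑ i, ω i * ‖y i - x‖ ^ 2 := by
  simp only [sum_inner, real_inner_smul_left, Finset.mul_sum, ← Finset.sum_neg_distrib]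
  obtain ⟨i₀, hi₀⟩ := hlt
  refine Finset.sum_lt_sum (fun i _ => ?_) ⟨i₀, Finset.mem_univ i₀, ?_⟩
  · have hsq := pow_le_pow_left₀ (norm_nonneg _) (hle i) 2
    nlinarith [two_mul_inner_sub_sub_eq x (y i) z, hω i]
  · have hsq := pow_lt_pow_left₀ hi₀ (norm_nonneg _) two_ne_zero
    nlinarith [two_mul_inner_sub_sub_eq x (y i₀) z, hω i₀]

end

theorem generalized_relaxation_sQNE_general
    {H : Type*} [NormedAddCommGroup H] [InnerProductSpace ℝ H]
    {E : ℕ} (U : Fin E → H → H) (ω : Fin E → ℝ)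
    (hω : ∀ t, 0 < ω t) (hωsum : ∑ t, ω t = 1)
    (hsqne : ∀ t x, U t x ≠ x → ∀ z, U t z = z → ‖U t x - z‖ < ‖x - z‖)
    (T : H → H) (hT : ∀ x, T x = ∑ t, ω t • U t x)
    (σ : H → ℝ)
    (hσ : ∀ x, T x ≠ x → 0 < σ x ∧
        σ x ≤ (∑ t, ω t * ‖U t x - x‖^2) / ‖T x - x‖^2)
    (Tσ : H → H) (hTσ : ∀ x, Tσ x = x + σ x • (T x - x)) :
    ∀ x, T x ≠ x → ∀ z, (∀ t, U t z = z) → ‖Tσ x - z‖ < ‖x - z‖ := by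
  intro x hTx z hz
  obtain ⟨hσpos, hσle⟩ := hσ x hTx
  have hv : T x - x = ∑ t, ω t • (U t x - x) := by
    simp only [smul_sub, Finset.sum_sub_distrib, ← Finset.sum_smul, hωsum, one_smul, hT]
  have hv0 : T x - x ≠ 0 := sub_ne_zero.mpr hTx
  obtain ⟨t₀, ht₀⟩ : ∃ t, U t x ≠ x := by
    obtain ⟨t, -, ht⟩ := Finset.exists_ne_zero_of_sum_ne_zero (hv ▸ hv0)
    exact ⟨t, sub_ne_zero.mp (right_ne_zero_of_smul ht)⟩
  have hle t : ‖U t x - z‖ ≤ ‖x - z‖ := by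
    by_cases h : U t x = x
    · rw [h]
    · exact (hsqne t x h z (hz t)).le
  have hinner := two_mul_inner_sum_smul_sub_lt hω (y := fun t => U t x) hle
    ⟨t₀, hsqne t₀ x ht₀ z (hz t₀)⟩
  have hσv : σ x * ‖T x - x‖ ^ 2 ≤ ∑ t, ω t * ‖U t x - x‖ ^ 2 :=
    (le_div_iff₀ (by positivity)).mp hσle
  rw [hTσ, add_sub_right_comm]
  refine norm_add_smul_lt_of_two_mul_inner_add_lt hσpos ?_
  rw [← hv] at hinner
  linarith

theorem generalized_relaxation_sQNE
    {H : Type*} [NormedAddCommGroup H] [InnerProductSpace ℝ H] [CompleteSpace H]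
    {E : ℕ} (U : Fin E → H → H) (ω : Fin E → ℝ)
    (hω : ∀ t, 0 < ω t) (hωsum : ∑ t, ω t = 1)
    (hC : ∃ z, ∀ t, U t z = z)
    (hsqne : ∀ t x, U t x ≠ x → ∀ z, U t z = z → ‖U t x - z‖ < ‖x - z‖)
    (T : H → H) (hT : ∀ x, T x = ∑ t, ω t • U t x)
    (σ : H → ℝ)
    (hσ : ∀ x, T x ≠ x → 0 < σ x ∧
        σ x ≤ (∑ t, ω t * ‖U t x - x‖^2) / ‖T x - x‖^2)
    (Tσ : H → H) (hTσ : ∀ x, Tσ x = x + σ x • (T x - x)) :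
    ∀ x, T x ≠ x → ∀ z, (∀ t, U t z = z) → ‖Tσ x - z‖ < ‖x - z‖ :=
  generalized_relaxation_sQNE_general U ω hω hωsum hsqne T hT σ hσ Tσ hTσ
end

section
/- Let T : H → H be strictly quasi-nonexpansive with Fix T ≠ ∅, σ = σ_max the step size of the averaged operator (with σ(x) ≥ 1 and T_σ strictly quasi-nonexpansive), and λ_k ∈ [ε, 1−ε] for ε ∈ (0,1/2). Then the sequence x^{k+1} = x^k + λ_k σ(x^k)(T x^k − x^k) is Fejér monotone with respect to Fix T: ‖x^{k+1} − z‖ ≤ ‖x^k − z‖ for every z ∈ Fix T. -/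
/-!
Every `U t` is quasi-nonexpansive towards its fixed points, which for a fixed point `z` of all of
them reads `‖U y - y‖² ≤ 2 ⟪y - U y, y - z⟫`. Averaging with the weights `ω` bounds
`S = ∑ ω t ‖U t y - y‖²` by `2 ⟪y - T y, y - z⟫`, and since `σ ‖T y - y‖² = S`, expanding the square
of the relaxed step with `μ = λ σ` gives `‖y + μ (T y - y) - z‖² ≤ ‖y - z‖² - λ (1 - λ) σ S`.
This needs `z` to be fixed by every `U t`, not only by `T`: if some `U t` moved a fixed point `z` of
`T`, strictness and positive weights would give `‖z - z₀‖ = ‖T z - z₀‖ < ‖z - z₀‖` for a common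
fixed point `z₀`.
-/

open Finset Function

section

variable {H : Type*} [NormedAddCommGroup H]

def QuasiNonexpansive (U : H → H) : Prop :=
  ∀ x z, IsFixedPt U z → ‖U x - z‖ ≤ ‖x - z‖

def StrictlyQuasiNonexpansive (U : H → H) : Prop :=
  ∀ x, U x ≠ x → ∀ z, IsFixedPt U z → ‖U x - z‖ < ‖x - z‖

theorem StrictlyQuasiNonexpansive.quasiNonexpansive {U : H → H}
    (hU : StrictlyQuasiNonexpansive U) : QuasiNonexpansive U := by
  intro x z hz
  by_cases hx : U x = x
  · rw [hx]
  · exact (hU x hx z hz).le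

theorem QuasiNonexpansive.norm_sub_sq_le_two_inner [InnerProductSpace ℝ H] {U : H → H} {z : H}
    (hU : QuasiNonexpansive U) (hz : IsFixedPt U z) (y : H) :
    ‖U y - y‖ ^ 2 ≤ 2 * inner ℝ (y - U y) (y - z) := by
  have hexpand : ‖U y - z‖ ^ 2 = ‖y - z‖ ^ 2 - 2 * inner ℝ (y - z) (y - U y) + ‖y - U y‖ ^ 2 := by
    rw [← norm_sub_sq_real, sub_sub_sub_cancel_left]
  have hle : ‖U y - z‖ ^ 2 ≤ ‖y - z‖ ^ 2 := by gcongr; exact hU y z hz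
  rw [norm_sub_rev, real_inner_comm]
  linarith

variable {ι : Type*} [Fintype ι] {ω : ι → ℝ}

theorem isFixedPt_of_isFixedPt_sum_smul [NormedSpace ℝ H] {U : ι → H → H}
    (hU : ∀ t, StrictlyQuasiNonexpansive (U t)) (hω : ∀ t, 0 < ω t) (hω1 : ∑ t, ω t = 1)
    (hC : ∃ z₀, ∀ t, IsFixedPt (U t) z₀) {z : H} (hz : ∑ t, ω t • U t z = z) (t : ι) :
    IsFixedPt (U t) z := by
  obtain ⟨z₀, hz₀⟩ := hC
  by_contra hmoved
  have hcomb : z - z₀ = ∑ t, ω t • (U t z - z₀) := by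
    simp only [smul_sub, sum_sub_distrib, ← sum_smul, hω1, one_smul, hz]
  have : ‖z - z₀‖ < ‖z - z₀‖ :=
    calc ‖z - z₀‖ ≤ ∑ t, ‖ω t • (U t z - z₀)‖ := hcomb ▸ norm_sum_le _ _
      _ = ∑ t, ω t * ‖U t z - z₀‖ := by
        simp only [norm_smul, Real.norm_of_nonneg (hω _).le]
      _ < ∑ t, ω t * ‖z - z₀‖ := by
        refine sum_lt_sum (fun s _ => ?_) ⟨t, mem_univ t, ?_⟩
        · exact mul_le_mul_of_nonneg_left ((hU s).quasiNonexpansive z z₀ (hz₀ s)) (hω s).le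
        · exact mul_lt_mul_of_pos_left (hU t z hmoved z₀ (hz₀ t)) (hω t)
      _ = ‖z - z₀‖ := by rw [← sum_mul, hω1, one_mul]
  exact lt_irrefl _ this

theorem sum_smul_norm_sub_sq_le_two_inner [InnerProductSpace ℝ H] {U : ι → H → H}
    (hU : ∀ t, QuasiNonexpansive (U t)) (hω : ∀ t, 0 ≤ ω t) (hω1 : ∑ t, ω t = 1)
    {z : H} (hz : ∀ t, IsFixedPt (U t) z) (y : H) :
    ∑ t, ω t * ‖U t y - y‖ ^ 2 ≤ 2 * inner ℝ (y - ∑ t, ω t • U t y) (y - z) := by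
  have hcomb : y - ∑ t, ω t • U t y = ∑ t, ω t • (y - U t y) := by
    simp only [smul_sub, sum_sub_distrib, ← sum_smul, hω1, one_smul]
  rw [hcomb, sum_inner, mul_sum]
  refine sum_le_sum fun t _ => ?_
  rw [real_inner_smul_left, mul_left_comm]
  exact mul_le_mul_of_nonneg_left ((hU t).norm_sub_sq_le_two_inner (hz t) y) (hω t)

theorem norm_add_smul_sub_sub_le [InnerProductSpace ℝ H]
    {y a z : H} {S σ lam : ℝ} (hS : S ≤ 2 * inner ℝ (y - a) (y - z)) (hσS : σ * ‖a - y‖ ^ 2 = S)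
    (hσ : 0 ≤ σ) (hlam : lam ∈ Set.Icc (0 : ℝ) 1) :
    ‖y + (lam * σ) • (a - y) - z‖ ≤ ‖y - z‖ := by
  set μ := lam * σ
  have hexpand : ‖y + μ • (a - y) - z‖ ^ 2
      = ‖y - z‖ ^ 2 - 2 * μ * inner ℝ (y - a) (y - z) + μ ^ 2 * ‖a - y‖ ^ 2 := by
    rw [show y + μ • (a - y) - z = (y - z) - μ • (y - a) by module, norm_sub_sq_real,
      real_inner_smul_right, norm_smul, Real.norm_eq_abs, mul_pow, sq_abs, norm_sub_rev y a,
      real_inner_comm]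
    ring
  have hS0 : 0 ≤ S := hσS ▸ by positivity
  have hμ : 0 ≤ μ := mul_nonneg hlam.1 hσ
  have hdecrease : ‖y + μ • (a - y) - z‖ ^ 2 ≤ ‖y - z‖ ^ 2 - lam * (1 - lam) * σ * S := by
    have hquad : μ ^ 2 * ‖a - y‖ ^ 2 = lam * μ * S := by rw [← hσS]; ring
    rw [hexpand, hquad]
    nlinarith [mul_le_mul_of_nonneg_left hS hμ]
  have : 0 ≤ lam * (1 - lam) * σ * S :=
    mul_nonneg (mul_nonneg (mul_nonneg hlam.1 (sub_nonneg.2 hlam.2)) hσ) hS0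
  exact pow_le_pow_iff_left₀ (norm_nonneg _) (norm_nonneg _) two_ne_zero |>.mp (by linarith)

end

theorem algorithm_fejer_monotone_general
    {H : Type*} [NormedAddCommGroup H] [InnerProductSpace ℝ H]
    {E : ℕ} (U : Fin E → H → H) (ω : Fin E → ℝ)
    (hω : ∀ t, 0 < ω t) (hωsum : ∑ t, ω t = 1)
    (hC : ∃ z, ∀ t, U t z = z)
    (hsqne : ∀ t x, U t x ≠ x → ∀ z, U t z = z → ‖U t x - z‖ < ‖x - z‖)
    (T : H → H) (hT : ∀ x, T x = ∑ t, ω t • U t x)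
    (σ : H → ℝ)
    (hσ1 : ∀ x, T x ≠ x → σ x = (∑ t, ω t * ‖U t x - x‖^2) / ‖T x - x‖^2)
    (ε : ℝ) (hε : ε ∈ Set.Ioo (0:ℝ) (1/2))
    (lam : ℕ → ℝ) (hlam : ∀ k, lam k ∈ Set.Icc ε (1 - ε))
    (x : ℕ → H)
    (hx : ∀ k, x (k+1) = x k + (lam k * σ (x k)) • (T (x k) - x k)) :
    ∀ z, T z = z → ∀ k, ‖x (k+1) - z‖ ≤ ‖x k - z‖ := by
  obtain rfl : T = fun x => ∑ t, ω t • U t x := funext hT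
  intro z hz k
  rw [hx k]
  set y := x k
  by_cases hTy : ∑ t, ω t • U t y = y
  · simp [hTy]
  have hzU := isFixedPt_of_isFixedPt_sum_smul hsqne hω hωsum hC hz
  have hnorm : 0 < ‖∑ t, ω t • U t y - y‖ ^ 2 := by
    have := norm_pos_iff.mpr (sub_ne_zero.mpr hTy); positivity
  refine norm_add_smul_sub_sub_le
    (sum_smul_norm_sub_sq_le_two_inner (fun t => StrictlyQuasiNonexpansive.quasiNonexpansive (hsqne t)) (fun t => (hω t).le) hωsum hzU y) ?_ ?_ ?_
  · rw [hσ1 y hTy, div_mul_cancel₀ _ hnorm.ne']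
  · rw [hσ1 y hTy]; exact div_nonneg (sum_nonneg fun t _ => by have := hω t; positivity) hnorm.le
  · obtain ⟨hε0, hε1⟩ := hε; obtain ⟨hlo, hhi⟩ := hlam k
    constructor <;> linarith

theorem algorithm_fejer_monotone
    {H : Type*} [NormedAddCommGroup H] [InnerProductSpace ℝ H] [CompleteSpace H]
    {E : ℕ} (U : Fin E → H → H) (ω : Fin E → ℝ)
    (hω : ∀ t, 0 < ω t) (hωsum : ∑ t, ω t = 1)
    (hC : ∃ z, ∀ t, U t z = z)
    (hsqne : ∀ t x, U t x ≠ x → ∀ z, U t z = z → ‖U t x - z‖ < ‖x - z‖)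
    (T : H → H) (hT : ∀ x, T x = ∑ t, ω t • U t x)
    (σ : H → ℝ)
    (hσ1 : ∀ x, T x ≠ x → σ x = (∑ t, ω t * ‖U t x - x‖^2) / ‖T x - x‖^2)
    (hσ2 : ∀ x, T x = x → σ x = 1)
    (ε : ℝ) (hε : ε ∈ Set.Ioo (0:ℝ) (1/2))
    (lam : ℕ → ℝ) (hlam : ∀ k, lam k ∈ Set.Icc ε (1 - ε))
    (x : ℕ → H)
    (hx : ∀ k, x (k+1) = x k + (lam k * σ (x k)) • (T (x k) - x k)) :
    ∀ z, T z = z → ∀ k, ‖x (k+1) - z‖ ≤ ‖x k - z‖ :=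
  algorithm_fejer_monotone_general U ω hω hωsum hC hsqne T hT σ hσ1 ε hε lam hlam x hx
end

section
/- Under the assumptions of the string-averaging algorithm with σ = σ_max and λ_k ∈ [ε, 1−ε], the iterates satisfy the strict block inequality ‖x^{k+1} − z‖² < ‖x^k − z‖² − λ_k(1−λ_k) Σ_t ω_t ‖U_t x^k − x^k‖² whenever x^k ∉ Fix T; consequently ‖U_t x^k − x^k‖ → 0 as k → ∞ for every t. -/
/-!
At a point `y` with `T y ≠ y` write `S = ∑ ω_t ‖U_t y - y‖²` and `d = T y - y`. Quasi-nonexpansiveness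
of each `U_t` towards a fixed point `z` reads `2⟪U_t y - y, y - z⟫ ≤ -‖U_t y - y‖²`, strictly for some `t`;
averaging gives `2⟪d, y - z⟫ < -S`, while Jensen gives `‖d‖² ≤ S`, i.e. the extrapolation factor
`σ = S / ‖d‖²` is at least `1`. Expanding `‖y - z + λσ d‖²` with these two facts yields the strict block
inequality. Since `λ(1 - λ) ≥ ε²`, the numbers `ε² S(x^k)` are bounded by the telescoping decrements of
`‖x^k - z‖²`, so they are summable and `S(x^k) → 0`.
-/

open Finset Filter Topology

def IsStrictlyQuasiNonexpansive {E : Type*} [SeminormedAddCommGroup E] (f : E → E) : Prop :=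
  ∀ x, f x ≠ x → ∀ z, f z = z → ‖f x - z‖ < ‖x - z‖

lemma IsStrictlyQuasiNonexpansive.norm_sub_le {E : Type*} [SeminormedAddCommGroup E] {f : E → E}
    (hf : IsStrictlyQuasiNonexpansive f) {z : E} (hz : f z = z) (x : E) :
    ‖f x - z‖ ≤ ‖x - z‖ := by
  by_cases hx : f x = x
  · rw [hx]
  · exact (hf x hx z hz).le

section Averaging

variable {ι : Type*} [Fintype ι] {ω : ι → ℝ}

lemma sum_smul_sub_eq_sum_smul_sub {E : Type*} [AddCommGroup E] [Module ℝ E]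
    (hωsum : ∑ t, ω t = 1) (v : ι → E) (c : E) :
    ∑ t, ω t • v t - c = ∑ t, ω t • (v t - c) := by
  simp only [smul_sub, sum_sub_distrib, ← sum_smul, hωsum, one_smul]

lemma sum_smul_eq_self_iff_forall_eq {E : Type*} [NormedAddCommGroup E] [NormedSpace ℝ E]
    {U : ι → E → E} (hω : ∀ t, 0 < ω t) (hωsum : ∑ t, ω t = 1)
    (hU : ∀ t, IsStrictlyQuasiNonexpansive (U t)) (hC : ∃ z, ∀ t, U t z = z) {y : E} :
    ∑ t, ω t • U t y = y ↔ ∀ t, U t y = y := by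
  refine ⟨fun hy t => ?_, fun hy => by simp only [hy, ← sum_smul, hωsum, one_smul]⟩
  obtain ⟨z, hz⟩ := hC
  by_contra hne
  have : ‖y - z‖ < ‖y - z‖ :=
    calc ‖y - z‖ = ‖∑ s, ω s • (U s y - z)‖ := by
          rw [← sum_smul_sub_eq_sum_smul_sub hωsum, hy]
      _ ≤ ∑ s, ω s * ‖U s y - z‖ := by
          refine (norm_sum_le _ _).trans_eq (sum_congr rfl fun s _ => ?_)
          rw [norm_smul, Real.norm_of_nonneg (hω s).le]
      _ < ∑ s, ω s * ‖y - z‖ :=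
          sum_lt_sum (fun s _ => mul_le_mul_of_nonneg_left ((hU s).norm_sub_le (hz s) y) (hω s).le)
            ⟨t, mem_univ t, mul_lt_mul_of_pos_left (hU t y hne z (hz t)) (hω t)⟩
      _ = ‖y - z‖ := by rw [← sum_mul, hωsum, one_mul]
  exact lt_irrefl _ this

lemma norm_sum_smul_sq_le {E : Type*} [SeminormedAddCommGroup E] [NormedSpace ℝ E]
    (hω : ∀ t, 0 ≤ ω t) (hωsum : ∑ t, ω t = 1) (v : ι → E) :
    ‖∑ t, ω t • v t‖ ^ 2 ≤ ∑ t, ω t * ‖v t‖ ^ 2 :=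
  ((convexOn_norm convex_univ).pow (fun _ _ => norm_nonneg _) 2).map_sum_le
    (fun t _ => hω t) hωsum (fun _ _ => Set.mem_univ _)

lemma tendsto_norm_zero_of_tendsto_sum_mul_sq {E : Type*} [SeminormedAddCommGroup E]
    (hω : ∀ t, 0 < ω t) {v : ℕ → ι → E}
    (h : Tendsto (fun k => ∑ t, ω t * ‖v k t‖ ^ 2) atTop (𝓝 0)) (t : ι) :
    Tendsto (fun k => ‖v k t‖) atTop (𝓝 0) := by
  have hterm : ∀ k s, 0 ≤ ω s * ‖v k s‖ ^ 2 := fun k s => mul_nonneg (hω s).le (sq_nonneg _)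
  refine squeeze_zero (fun _ => norm_nonneg _) (fun k => ?_)
    (by simpa using (h.div_const (ω t)).sqrt)
  rw [Real.le_sqrt (norm_nonneg _) (div_nonneg (sum_nonneg fun s _ => hterm k s) (hω t).le),
    le_div_iff₀' (hω t)]
  exact single_le_sum (f := fun s => ω s * ‖v k s‖ ^ 2) (fun s _ => hterm k s) (mem_univ t)

end Averaging

section InnerProduct

variable {H : Type*} [NormedAddCommGroup H] [InnerProductSpace ℝ H]

lemma norm_sub_sq_eq_add_two_inner (u y z : H) :
    ‖u - z‖ ^ 2 = ‖u - y‖ ^ 2 + 2 * inner ℝ (u - y) (y - z) + ‖y - z‖ ^ 2 := by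
  rw [← sub_add_sub_cancel u y z, norm_add_sq_real]

lemma two_inner_le_of_norm_sub_le {u y z : H} (h : ‖u - z‖ ≤ ‖y - z‖) :
    2 * inner ℝ (u - y) (y - z) ≤ -‖u - y‖ ^ 2 := by
  have := pow_le_pow_left₀ (norm_nonneg _) h 2
  linarith [norm_sub_sq_eq_add_two_inner u y z]

lemma two_inner_lt_of_norm_sub_lt {u y z : H} (h : ‖u - z‖ < ‖y - z‖) :
    2 * inner ℝ (u - y) (y - z) < -‖u - y‖ ^ 2 := by
  have := pow_lt_pow_left₀ h (norm_nonneg _) two_ne_zero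
  linarith [norm_sub_sq_eq_add_two_inner u y z]

lemma two_inner_sum_smul_sub_lt {ι : Type*} [Fintype ι] {ω : ι → ℝ} {U : ι → H → H}
    (hω : ∀ t, 0 < ω t) (hωsum : ∑ t, ω t = 1) (hU : ∀ t, IsStrictlyQuasiNonexpansive (U t))
    {y z : H} (hz : ∀ t, U t z = z) (hy : ∃ t, U t y ≠ y) :
    2 * inner ℝ (∑ t, ω t • U t y - y) (y - z) < -∑ t, ω t * ‖U t y - y‖ ^ 2 := by
  obtain ⟨t, ht⟩ := hy
  rw [sum_smul_sub_eq_sum_smul_sub hωsum, sum_inner, mul_sum, ← sum_neg_distrib]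
  refine sum_lt_sum (fun s _ => ?_) ⟨t, mem_univ t, ?_⟩
  · rw [real_inner_smul_left, mul_left_comm, ← mul_neg]
    exact mul_le_mul_of_nonneg_left
      (two_inner_le_of_norm_sub_le ((hU s).norm_sub_le (hz s) y)) (hω s).le
  · rw [real_inner_smul_left, mul_left_comm, ← mul_neg]
    exact mul_lt_mul_of_pos_left (two_inner_lt_of_norm_sub_lt (hU t y ht z (hz t))) (hω t)

lemma norm_add_smul_sq_lt {d w : H} {S l : ℝ} (hd : d ≠ 0) (hdS : ‖d‖ ^ 2 ≤ S)
    (hinner : 2 * inner ℝ d w < -S) (hl₀ : 0 < l) (hl₁ : l ≤ 1) :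
    ‖w + (l * (S / ‖d‖ ^ 2)) • d‖ ^ 2 < ‖w‖ ^ 2 - l * (1 - l) * S := by
  have hn : 0 < ‖d‖ ^ 2 := by positivity
  set r := S / ‖d‖ ^ 2
  have hrn : r * ‖d‖ ^ 2 = S := div_mul_cancel₀ S hn.ne'
  have hr : 1 ≤ r := (one_le_div hn).2 hdS
  have hlr : 0 < l * r := mul_pos hl₀ (one_pos.trans_le hr)
  have expand : ‖w + (l * r) • d‖ ^ 2 = ‖w‖ ^ 2 + l * r * (2 * inner ℝ d w) + l ^ 2 * r * S := by
    rw [norm_add_sq_real, real_inner_smul_right, norm_smul, real_inner_comm, mul_pow,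
      Real.norm_eq_abs, sq_abs, ← hrn]
    ring
  have hS : 0 ≤ S := (sq_nonneg _).trans hdS
  rw [expand]
  nlinarith [mul_lt_mul_of_pos_left hinner hlr,
    mul_nonneg (mul_nonneg (mul_nonneg hl₀.le (sub_nonneg.2 hl₁)) hS) (sub_nonneg.2 hr)]

end InnerProduct

lemma sq_le_mul_one_sub_of_mem_Icc {ε l : ℝ} (hε : 0 ≤ ε) (hl : l ∈ Set.Icc ε (1 - ε)) :
    ε ^ 2 ≤ l * (1 - l) := by
  have hε₁ : 0 ≤ 1 - 2 * ε := by linarith [hl.1, hl.2]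
  nlinarith [mul_nonneg (sub_nonneg.2 hl.1) (sub_nonneg.2 hl.2), mul_nonneg hε hε₁]

lemma tendsto_zero_of_mul_le_sub_succ {a b : ℕ → ℝ} {c : ℝ} (hc : 0 < c) (ha : ∀ k, 0 ≤ a k)
    (hb : ∀ k, 0 ≤ b k) (hab : ∀ k, c * a k ≤ b k - b (k + 1)) :
    Tendsto a atTop (𝓝 0) := by
  have hsum : ∀ n, ∑ k ∈ range n, c * a k ≤ b 0 := fun n =>
    calc ∑ k ∈ range n, c * a k ≤ ∑ k ∈ range n, (b k - b (k + 1)) := sum_le_sum fun k _ => hab k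
      _ = b 0 - b n := sum_range_sub' b n
      _ ≤ b 0 := sub_le_self _ (hb n)
  have := ((summable_of_sum_range_le (fun k => mul_nonneg hc.le (ha k)) hsum).tendsto_atTop_zero
    ).const_mul c⁻¹
  simpa [inv_mul_cancel_left₀ hc.ne'] using this

theorem algorithm_strict_block_inequality_general
    {H : Type*} [NormedAddCommGroup H] [InnerProductSpace ℝ H]
    {E : ℕ} (U : Fin E → H → H) (ω : Fin E → ℝ)
    (hω : ∀ t, 0 < ω t) (hωsum : ∑ t, ω t = 1)
    (hC : ∃ z, ∀ t, U t z = z)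
    (hsqne : ∀ t x, U t x ≠ x → ∀ z, U t z = z → ‖U t x - z‖ < ‖x - z‖)
    (T : H → H) (hT : ∀ x, T x = ∑ t, ω t • U t x)
    (σ : H → ℝ)
    (hσ1 : ∀ x, T x ≠ x → σ x = (∑ t, ω t * ‖U t x - x‖^2) / ‖T x - x‖^2)
    (ε : ℝ) (hε : ε ∈ Set.Ioo (0:ℝ) (1/2))
    (lam : ℕ → ℝ) (hlam : ∀ k, lam k ∈ Set.Icc ε (1 - ε))
    (x : ℕ → H)
    (hx : ∀ k, x (k+1) = x k + (lam k * σ (x k)) • (T (x k) - x k)) :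
    (∀ z, T z = z → ∀ k, T (x k) ≠ x k →
      ‖x (k+1) - z‖^2 <
        ‖x k - z‖^2 - lam k * (1 - lam k) * ∑ t, ω t * ‖U t (x k) - x k‖^2) ∧
    (∀ t, Filter.Tendsto (fun k => ‖U t (x k) - x k‖) Filter.atTop (nhds 0)) := by
  have hfix : ∀ y, T y = y ↔ ∀ t, U t y = y := fun y => by
    rw [hT]; exact sum_smul_eq_self_iff_forall_eq hω hωsum hsqne hC
  have block : ∀ z, T z = z → ∀ k, T (x k) ≠ x k →
      ‖x (k+1) - z‖^2 <
        ‖x k - z‖^2 - lam k * (1 - lam k) * ∑ t, ω t * ‖U t (x k) - x k‖^2 := by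
    intro z hz k hk
    have hU : ∃ t, U t (x k) ≠ x k := by simpa [hfix] using hk
    rw [hx k, hσ1 _ hk, add_sub_right_comm, hT]
    rw [hT] at hk
    refine norm_add_smul_sq_lt (sub_ne_zero.2 hk) ?_
      (two_inner_sum_smul_sub_lt hω hωsum hsqne ((hfix z).1 hz) hU)
      (hε.1.trans_le (hlam k).1) (by linarith [(hlam k).2, hε.1])
    rw [sum_smul_sub_eq_sum_smul_sub hωsum]
    exact norm_sum_smul_sq_le (fun t => (hω t).le) hωsum _
  refine ⟨block, tendsto_norm_zero_of_tendsto_sum_mul_sq hω ?_⟩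
  obtain ⟨z, hz⟩ := hC
  have hS : ∀ k, 0 ≤ ∑ t, ω t * ‖U t (x k) - x k‖ ^ 2 := fun k =>
    sum_nonneg fun t _ => mul_nonneg (hω t).le (sq_nonneg _)
  refine tendsto_zero_of_mul_le_sub_succ (pow_pos hε.1 2) hS
    (fun k => sq_nonneg ‖x k - z‖) fun k => ?_
  by_cases hk : T (x k) = x k
  · simp [hx k, hk, (hfix _).1 hk]
  · linarith [block z ((hfix z).2 hz) k hk,
      mul_le_mul_of_nonneg_right (sq_le_mul_one_sub_of_mem_Icc hε.1.le (hlam k)) (hS k)]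

theorem algorithm_strict_block_inequality
    {H : Type*} [NormedAddCommGroup H] [InnerProductSpace ℝ H] [CompleteSpace H]
    {E : ℕ} (U : Fin E → H → H) (ω : Fin E → ℝ)
    (hω : ∀ t, 0 < ω t) (hωsum : ∑ t, ω t = 1)
    (hC : ∃ z, ∀ t, U t z = z)
    (hsqne : ∀ t x, U t x ≠ x → ∀ z, U t z = z → ‖U t x - z‖ < ‖x - z‖)
    (T : H → H) (hT : ∀ x, T x = ∑ t, ω t • U t x)
    (σ : H → ℝ)
    (hσ1 : ∀ x, T x ≠ x → σ x = (∑ t, ω t * ‖U t x - x‖^2) / ‖T x - x‖^2)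
    (hσ2 : ∀ x, T x = x → σ x = 1)
    (ε : ℝ) (hε : ε ∈ Set.Ioo (0:ℝ) (1/2))
    (lam : ℕ → ℝ) (hlam : ∀ k, lam k ∈ Set.Icc ε (1 - ε))
    (x : ℕ → H)
    (hx : ∀ k, x (k+1) = x k + (lam k * σ (x k)) • (T (x k) - x k)) :
    (∀ z, T z = z → ∀ k, T (x k) ≠ x k →
      ‖x (k+1) - z‖^2 <
        ‖x k - z‖^2 - lam k * (1 - lam k) * ∑ t, ω t * ‖U t (x k) - x k‖^2) ∧
    (∀ t, Filter.Tendsto (fun k => ‖U t (x k) - x k‖) Filter.atTop (nhds 0)) :=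
  algorithm_strict_block_inequality_general U ω hω hωsum hC hsqne T hT σ hσ1 ε hε lam hlam x hx
end
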